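/- Let S̃₀(r) ≍ r^δ e^{r^α} for r > 1 with α ∈ (0,1], and let Ṽ₀(R) = ∫₀^R S̃₀(r) dr. Then for large R, the Cheeger-type ratio satisfies 4 (S̃₀(R)/Ṽ₀(R))² ≤ C R^{-(2-2α)}, and consequently, choosing R(t) = t^{1/(2-α)}, the quantity (1/Ṽ₀(R(t))) exp( - C t / R(t)^{2-2α} ) is bounded below by C₁ exp(-C₂ t^{α/(2-α)}) for large t. -/

import Mathlib

/-! On `[R/2, R]` the density `r^δ e^{r^α}` is comparable to `R^{δ+1-α}` times the derivative
`α r^{α-1} e^{r^α}` of `e^{r^α}`, and `e^{(R/2)^α} ≤ e^{R^α}/2` for large `R`; hence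
`Ṽ₀(R) ≳ R^{δ+1-α} e^{R^α}` and `S̃₀(R)/Ṽ₀(R) = O(R^{α-1})`. In the other direction, crudely,
`Ṽ₀(R) ≲ R^{|δ|+1} e^{R^α} ≤ e^{2R^α}`. For `R = t^{1/(2-α)}` both `R^α` and `t/R^{2-2α}` equal
`t^{α/(2-α)}`, which turns this upper bound into the lower bound in `t`. -/

open Set Real MeasureTheory Filter intervalIntegral

lemma Filter.Eventually.exists_pos_forall_ge {P : ℝ → Prop} (h : ∀ᶠ x in atTop, P x) :
    ∃ x₀ > 0, ∀ x ≥ x₀, P x := by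
  obtain ⟨a, ha⟩ := h.exists_forall_of_atTop
  exact ⟨max a 1, by positivity, fun x hx => ha x (le_of_max_le_left hx)⟩

lemma eventually_rpow_le_exp_rpow (p : ℝ) {q : ℝ} (hq : 0 < q) :
    ∀ᶠ t in atTop, t ^ p ≤ exp (t ^ q) := by
  have h :=
    ((tendsto_exp_div_rpow_atTop (p / q)).comp (tendsto_rpow_atTop hq)).eventually_ge_atTop 1
  filter_upwards [h, eventually_gt_atTop 0] with t ht ht0
  rwa [Function.comp_apply, ← rpow_mul ht0.le, mul_div_cancel₀ _ hq.ne',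
    le_div_iff₀ (by positivity), one_mul] at ht

lemma rpow_le_rpow_abs {r R δ : ℝ} (hr : 1 ≤ r) (hrR : r ≤ R) : r ^ δ ≤ R ^ |δ| :=
  (rpow_le_rpow_of_exponent_le hr (le_abs_self δ)).trans
    (rpow_le_rpow (by linarith) hrR (abs_nonneg δ))

lemma two_rpow_neg_abs_mul_rpow_le {r R β : ℝ} (hR : 0 < R) (hr : r ∈ Icc (R / 2) R) :
    2 ^ (-|β|) * R ^ β ≤ r ^ β := by
  have hx₁ : 1 / 2 ≤ r / R := by rw [le_div_iff₀ hR]; linarith [hr.1]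
  have hx₂ : r / R ≤ 1 := (div_le_one hR).2 hr.2
  have hx : 2 ^ (-|β|) ≤ (r / R) ^ β := calc
    (2 : ℝ) ^ (-|β|) = (1 / 2) ^ |β| := by rw [rpow_neg zero_le_two, one_div, inv_rpow zero_le_two]
    _ ≤ (r / R) ^ |β| := rpow_le_rpow (by norm_num) hx₁ (abs_nonneg β)
    _ ≤ (r / R) ^ β := rpow_le_rpow_of_exponent_ge (by linarith) hx₂ (le_abs_self β)
  calc 2 ^ (-|β|) * R ^ β ≤ (r / R) ^ β * R ^ β := by gcongr
    _ = r ^ β := by rw [← mul_rpow (by linarith) hR.le, div_mul_cancel₀ _ hR.ne']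

lemma intervalIntegrable_exp_rpow_mul_deriv {α a b : ℝ} (ha : 0 < a) (hab : a ≤ b) :
    IntervalIntegrable (fun r => exp (r ^ α) * (α * r ^ (α - 1))) volume a b := by
  have hne : ∀ x ∈ uIcc a b, x ≠ 0 := fun x hx => (ha.trans_le (uIcc_of_le hab ▸ hx).1).ne'
  exact ContinuousOn.intervalIntegrable
    (by fun_prop (disch := exact fun x hx => Or.inl (hne x hx)))

lemma integral_exp_rpow_mul_deriv {α a b : ℝ} (ha : 0 < a) (hab : a ≤ b) :
    ∫ r in a..b, exp (r ^ α) * (α * r ^ (α - 1)) = exp (b ^ α) - exp (a ^ α) :=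
  integral_eq_sub_of_hasDerivAt (fun _ hx => (hasDerivAt_rpow_const
    (Or.inl (ha.trans_le (uIcc_of_le hab ▸ hx).1).ne')).exp)
    (intervalIntegrable_exp_rpow_mul_deriv ha hab)

lemma eventually_exp_half_rpow_le {α : ℝ} (hα : 0 < α) :
    ∀ᶠ R in atTop, exp ((R / 2) ^ α) ≤ exp (R ^ α) / 2 := by
  have hgap : 0 < 1 - (2 : ℝ) ^ (-α) :=
    sub_pos.2 (rpow_lt_one_of_one_lt_of_neg one_lt_two (neg_neg_of_pos hα))
  filter_upwards [(tendsto_rpow_atTop hα).eventually_ge_atTop (log 2 / (1 - 2 ^ (-α))),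
    eventually_ge_atTop 0] with R hR hR0
  rw [div_le_iff₀ hgap] at hR
  have hhalf : (R / 2) ^ α = 2 ^ (-α) * R ^ α := by
    rw [div_rpow hR0 zero_le_two, rpow_neg zero_le_two]; ring
  calc exp ((R / 2) ^ α) ≤ exp (R ^ α - log 2) := exp_le_exp.2 (by rw [hhalf]; linarith)
    _ = exp (R ^ α) / 2 := by rw [exp_sub, exp_log two_pos]

lemma div_rpow_one_div_sub_rpow_eq {t α : ℝ} (ht : 0 < t) (hα : α ≠ 2) :
    t / (t ^ (1 / (2 - α))) ^ (2 - 2 * α) = t ^ (α / (2 - α)) := by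
  have h : 2 - α ≠ 0 := sub_ne_zero.2 hα.symm
  rw [← rpow_mul ht.le, div_eq_iff (by positivity), ← rpow_add ht]
  conv_lhs => rw [← rpow_one t]
  congr 1
  field_simp
  ring

section Volume

variable {S : ℝ → ℝ} {α δ : ℝ}

lemma intervalIntegrable_of_continuousOn_Ici (hcont : ContinuousOn S (Ici 0)) {a b : ℝ}
    (ha : 0 ≤ a) (hb : 0 ≤ b) : IntervalIntegrable S volume a b :=
  (hcont.mono fun _ hx => le_min ha hb |>.trans hx.1).intervalIntegrable

lemma integral_half_le_integral (hcont : ContinuousOn S (Ici 0)) (hS0 : ∀ r ≥ 0, 0 ≤ S r)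
    {R : ℝ} (hR : 0 ≤ R) : ∫ r in (R / 2)..R, S r ≤ ∫ r in 0..R, S r := by
  have hsplit := integral_add_adjacent_intervals
    (intervalIntegrable_of_continuousOn_Ici hcont le_rfl (by linarith : 0 ≤ R / 2))
    (intervalIntegrable_of_continuousOn_Ici hcont (by linarith) hR)
  have hnonneg : 0 ≤ ∫ r in 0..R / 2, S r :=
    integral_nonneg (by linarith) fun r hr => hS0 r hr.1
  linarith

lemma eventually_mul_rpow_mul_exp_le_integral_half {c : ℝ} (hα : 0 < α) (hc : 0 < c)
    (hcont : ContinuousOn S (Ici 0)) (hS : ∀ r > 1, c * (r ^ δ * exp (r ^ α)) ≤ S r) :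
    ∃ c' > 0, ∀ᶠ R in atTop,
      c' * (R ^ (δ + 1 - α) * exp (R ^ α)) ≤ ∫ r in (R / 2)..R, S r := by
  set β := δ + 1 - α with hβ
  refine ⟨c * 2 ^ (-|β|) / (2 * α), by positivity, ?_⟩
  filter_upwards [eventually_exp_half_rpow_le hα, eventually_ge_atTop 4] with R hexp hR
  set K := c * 2 ^ (-|β|) * R ^ β / α
  have hpointwise : ∀ r ∈ Icc (R / 2) R, K * (exp (r ^ α) * (α * r ^ (α - 1))) ≤ S r := by
    intro r hr
    have hr0 : 0 < r := by linarith [hr.1]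
    calc K * (exp (r ^ α) * (α * r ^ (α - 1)))
        = c * ((2 ^ (-|β|) * R ^ β) * (r ^ (α - 1) * exp (r ^ α))) := by
          simp only [K]; field_simp
      _ ≤ c * (r ^ β * (r ^ (α - 1) * exp (r ^ α))) := by
          gcongr; exact two_rpow_neg_abs_mul_rpow_le (by linarith) hr
      _ = c * (r ^ δ * exp (r ^ α)) := by
          rw [show δ = β + (α - 1) by rw [hβ]; ring, rpow_add hr0]; ring
      _ ≤ S r := hS r (by linarith [hr.1])
  have hint := integral_mono_on (by linarith)
    ((intervalIntegrable_exp_rpow_mul_deriv (by linarith) (by linarith)).const_mul K)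
    (intervalIntegrable_of_continuousOn_Ici hcont (by linarith) (by linarith)) hpointwise
  rw [intervalIntegral.integral_const_mul,
    integral_exp_rpow_mul_deriv (by linarith) (by linarith)] at hint
  calc c * 2 ^ (-|β|) / (2 * α) * (R ^ β * exp (R ^ α)) = K * (exp (R ^ α) / 2) := by
        simp only [K]; field_simp
    _ ≤ K * (exp (R ^ α) - exp ((R / 2) ^ α)) := by gcongr; linarith
    _ ≤ _ := hint

lemma eventually_sq_div_integral_le {c C : ℝ} (hα : 0 < α) (hc : 0 < c)
    (hcont : ContinuousOn S (Ici 0)) (hS0 : ∀ r ≥ 0, 0 ≤ S r)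
    (hlow : ∀ r > 1, c * (r ^ δ * exp (r ^ α)) ≤ S r)
    (hup : ∀ r > 1, S r ≤ C * (r ^ δ * exp (r ^ α))) :
    ∃ c' > 0, ∀ᶠ R in atTop,
      (S R / ∫ r in 0..R, S r) ^ 2 ≤ (C / c') ^ 2 * R ^ (-(2 - 2 * α)) := by
  obtain ⟨c', hc', hhalf⟩ := eventually_mul_rpow_mul_exp_le_integral_half hα hc hcont hlow
  refine ⟨c', hc', ?_⟩
  filter_upwards [hhalf, eventually_ge_atTop 2] with R hV hR
  have hR0 : 0 < R := by linarith
  have hVlow : c' * (R ^ (δ + 1 - α) * exp (R ^ α)) ≤ ∫ r in 0..R, S r :=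
    hV.trans (integral_half_le_integral hcont hS0 hR0.le)
  have hratio : S R / ∫ r in 0..R, S r ≤ C / c' * R ^ (α - 1) := calc
    S R / ∫ r in 0..R, S r
        ≤ C * (R ^ δ * exp (R ^ α)) / (c' * (R ^ (δ + 1 - α) * exp (R ^ α))) :=
      div_le_div₀ ((hS0 R hR0.le).trans (hup R (by linarith))) (hup R (by linarith))
        (by positivity) hVlow
    _ = C / c' * R ^ (α - 1) := by
      rw [show R ^ δ = R ^ (δ + 1 - α) * R ^ (α - 1) by rw [← rpow_add hR0]; ring_nf]
      field_simp
  calc (S R / ∫ r in 0..R, S r) ^ 2 ≤ (C / c' * R ^ (α - 1)) ^ 2 :=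
        pow_le_pow_left₀ (div_nonneg (hS0 R hR0.le)
          (integral_nonneg hR0.le fun r hr => hS0 r hr.1)) hratio 2
    _ = (C / c') ^ 2 * R ^ (-(2 - 2 * α)) := by
      rw [mul_pow, ← rpow_mul_natCast hR0.le]; congr 2; push_cast; ring

lemma eventually_integral_le_mul_exp_two_mul_rpow {C : ℝ} (hα : 0 < α) (hC : 0 ≤ C)
    (hcont : ContinuousOn S (Ici 0)) (hS : ∀ r > 1, S r ≤ C * (r ^ δ * exp (r ^ α))) :
    ∃ K > 0, ∀ᶠ R in atTop, ∫ r in 0..R, S r ≤ K * exp (2 * R ^ α) := by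
  set M := ∫ r in (0 : ℝ)..2, S r
  refine ⟨|M| + C + 1, by positivity, ?_⟩
  filter_upwards [eventually_rpow_le_exp_rpow (|δ| + 1) hα, eventually_ge_atTop 2]
    with R hpoly hR
  have hpointwise : ∀ r ∈ Icc 2 R, S r ≤ C * (R ^ |δ| * exp (R ^ α)) := fun r hr => calc
    S r ≤ C * (r ^ δ * exp (r ^ α)) := hS r (by linarith [hr.1])
    _ ≤ C * (R ^ |δ| * exp (R ^ α)) := by
      gcongr
      · exact rpow_le_rpow_abs (by linarith [hr.1]) hr.2
      · linarith [hr.1]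
      · exact hr.2
  have htail := integral_mono_on hR
    (intervalIntegrable_of_continuousOn_Ici hcont zero_le_two (by linarith))
    intervalIntegrable_const hpointwise
  rw [intervalIntegral.integral_const, smul_eq_mul] at htail
  have hsplit : M + ∫ r in 2..R, S r = ∫ r in 0..R, S r := integral_add_adjacent_intervals
    (intervalIntegrable_of_continuousOn_Ici hcont le_rfl zero_le_two)
    (intervalIntegrable_of_continuousOn_Ici hcont zero_le_two (by linarith))
  have htail' : (R - 2) * (C * (R ^ |δ| * exp (R ^ α))) ≤ C * exp (2 * R ^ α) := calc
    (R - 2) * (C * (R ^ |δ| * exp (R ^ α))) ≤ C * (R ^ (|δ| + 1) * exp (R ^ α)) := by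
      rw [rpow_add_one (by positivity)]
      nlinarith [mul_nonneg hC (mul_nonneg (rpow_nonneg (by linarith : (0 : ℝ) ≤ R) |δ|)
        (exp_pos (R ^ α)).le)]
    _ ≤ C * exp (2 * R ^ α) := by
      rw [two_mul, exp_add]; gcongr
  have hM : M ≤ |M| * exp (2 * R ^ α) :=
    (le_abs_self M).trans (le_mul_of_one_le_right (abs_nonneg M) (one_le_exp (by positivity)))
  nlinarith [exp_pos (2 * R ^ α)]

end Volume

lemma eventually_exp_le_inv_mul_exp {V : ℝ → ℝ} {α B K : ℝ} (hα : α < 2)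
    (hVpos : ∀ R > 0, 0 < V R) (hV : ∀ᶠ R in atTop, V R ≤ K * exp (2 * R ^ α)) :
    ∀ᶠ t in atTop, K⁻¹ * exp (-(B + 2) * t ^ (α / (2 - α))) ≤
      (V (t ^ (1 / (2 - α))))⁻¹ * exp (-(B * t / (t ^ (1 / (2 - α))) ^ (2 - 2 * α))) := by
  have h2α : 0 < 2 - α := by linarith
  filter_upwards [(tendsto_rpow_atTop (one_div_pos.2 h2α)).eventually hV, eventually_gt_atTop 0]
    with t hVt ht
  have hRα : (t ^ (1 / (2 - α))) ^ α = t ^ (α / (2 - α)) := by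
    rw [← rpow_mul ht.le]; ring_nf
  rw [hRα] at hVt
  rw [mul_div_assoc, div_rpow_one_div_sub_rpow_eq ht hα.ne]
  calc K⁻¹ * exp (-(B + 2) * t ^ (α / (2 - α)))
      = (K * exp (2 * t ^ (α / (2 - α))))⁻¹ * exp (-(B * t ^ (α / (2 - α)))) := by
        rw [mul_inv, ← exp_neg, mul_assoc, ← exp_add]; ring_nf
    _ ≤ _ := by gcongr; exact hVpos _ (by positivity)

/-- Sharpness computation: if `S̃₀(r) ≍ r^δ e^{r^α}` for `r > 1` with `α ∈ (0,1]`,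
and `Ṽ₀(R) = ∫₀^R S̃₀`, then for large `R` the Cheeger-type ratio satisfies
`4(S̃₀(R)/Ṽ₀(R))² ≤ C R^{-(2-2α)}`, and with `R(t) = t^{1/(2-α)}` the quantity
`Ṽ₀(R(t))⁻¹ exp(-C t/R(t)^{2-2α})` is bounded below by `C₁ exp(-C₂ t^{α/(2-α)})`
for large `t`. -/
theorem stmt_18 (α δ : ℝ) (hα : α ∈ Ioc (0:ℝ) 1) (S : ℝ → ℝ)
    (hcont : ContinuousOn S (Ici 0)) (hpos : ∀ r ≥ (0:ℝ), 0 < S r)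
    (hcomp : ∃ C > (1:ℝ), ∀ r > (1:ℝ),
      C⁻¹ * (r ^ δ * exp (r ^ α)) ≤ S r ∧ S r ≤ C * (r ^ δ * exp (r ^ α))) :
    ∃ C > (0:ℝ),
      (∃ R₀ > (0:ℝ), ∀ R ≥ R₀,
        4 * (S R / ∫ r in (0:ℝ)..R, S r) ^ 2 ≤ C * R ^ (-(2 - 2*α))) ∧
      (∃ C₁ > (0:ℝ), ∃ C₂ > (0:ℝ), ∃ t₀ > (0:ℝ), ∀ t ≥ t₀,
        C₁ * exp (-C₂ * t ^ (α/(2 - α))) ≤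
          (∫ r in (0:ℝ)..(t ^ (1/(2 - α))), S r)⁻¹ *
            exp (-(C * t / (t ^ (1/(2 - α))) ^ (2 - 2*α)))) := by
  obtain ⟨hα0, hα1⟩ := hα
  obtain ⟨C, hC1, hS⟩ := hcomp
  have hC0 : 0 < C := one_pos.trans hC1
  have hS0 : ∀ r ≥ 0, 0 ≤ S r := fun r hr => (hpos r hr).le
  obtain ⟨c, hc, hratio⟩ := eventually_sq_div_integral_le hα0 (inv_pos.2 hC0) hcont hS0
    (fun r hr => (hS r hr).1) (fun r hr => (hS r hr).2)
  obtain ⟨K, hK, hV⟩ :=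
    eventually_integral_le_mul_exp_two_mul_rpow hα0 hC0.le hcont fun r hr => (hS r hr).2
  have hVpos : ∀ R > 0, 0 < ∫ r in 0..R, S r := fun R hR =>
    intervalIntegral_pos_of_pos_on (intervalIntegrable_of_continuousOn_Ici hcont le_rfl hR.le)
      (fun r hr => hpos r hr.1.le) hR
  refine ⟨4 * (C / c) ^ 2, by positivity, ?_, K⁻¹, inv_pos.2 hK, 4 * (C / c) ^ 2 + 2,
    by positivity, ?_⟩
  · exact (hratio.mono fun R h => by linarith).exists_pos_forall_ge
  · exact (eventually_exp_le_inv_mul_exp (by linarith) hVpos hV).exists_pos_forall_ge
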